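/- arXiv:2403.05072 — 2 statements merged into one kernel-verified Lean document; each statement's English description precedes it below -/
import Mathlib

section
/- For any partition λ of a positive integer n and any integer k ≥ 3, Σ_{u∈λ} h(u)^k ≤ n^k + Σ_{u∈λ} |c(u)|^k, with equality if and only if λ is a hook (i.e., λ_2 ≤ 1). -/
open Finset

/-- A Young diagram: a finite set of cells `(i, j)` with 1-based coordinates,
closed under decreasing either coordinate (down to 1).  Its rows are the
intervals `[1, λ_i]` for a weakly decreasing sequence `λ`. -/
def IsYoung (Y : Finset (ℕ × ℕ)) : Prop :=
  (∀ p ∈ Y, 1 ≤ p.1 ∧ 1 ≤ p.2) ∧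
    ∀ p ∈ Y, ∀ q : ℕ × ℕ, 1 ≤ q.1 → 1 ≤ q.2 → q.1 ≤ p.1 → q.2 ≤ p.2 → q ∈ Y

/-- `row Y i = λ_i`, the length of the `i`-th row. -/
def row (Y : Finset (ℕ × ℕ)) (i : ℕ) : ℕ := (Y.filter fun p => p.1 = i).card

/-- `col Y j = λ'_j`, the length of the `j`-th column (conjugate partition). -/
def col (Y : Finset (ℕ × ℕ)) (j : ℕ) : ℕ := (Y.filter fun p => p.2 = j).card

/-- Hook length `h(u) = λ_i + λ'_j - i - j + 1` of the cell `u = (i, j)`. -/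
def hk (Y : Finset (ℕ × ℕ)) (u : ℕ × ℕ) : ℤ :=
  (row Y u.1 : ℤ) + (col Y u.2 : ℤ) - u.1 - u.2 + 1

/-- Content `c(u) = j - i` of the cell `u = (i, j)`. -/
def ct (u : ℕ × ℕ) : ℤ := (u.2 : ℤ) - (u.1 : ℤ)

/-- `λ` is a hook partition: `λ_i ≤ 1` for all `i ≥ 2`. -/
def IsHook (Y : Finset (ℕ × ℕ)) : Prop := ∀ i, 2 ≤ i → row Y i ≤ 1

/-! Peel off the first hook. Write `a = λ₁`, `l = λ'₁`, `N = a + l - 1` for the corner hook and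
`Δ x = (x + 1)^k - x^k`. The cells off the first row and column form, shifted by `(1, 1)`, a
partition `μ` of `m = n - N` with the same hooks and contents. The hook of `(1, j)`, `j ≥ 2`, is the
reflected content `a - j + 1` plus the number of cells below it, so telescoping down the columns
(and along the rows, for the first column) charges each cell `(i, j)`, `i, j ≥ 2`, with
`Δ(a - j + i - 1) + Δ(l - i + j - 1)`. The two arguments sum to `N - 1` and `Δ - 1` is
superadditive, so each charge is at most `Δ N + 3 - 2^k`, while
`(N + m)^k ≥ N^k + m^k + m (Δ N - 1)`. Hence the excess `Σ h^k - n^k - Σ |c|^k` of `λ` is at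
most that of `μ` minus `m (2^k - 4)`: induction gives the inequality for `k ≥ 2`, strict for
`k ≥ 3` unless `μ = ∅`, i.e. unless `λ` is a hook. -/

open fwdDiff

section CommRing

variable {R : Type*} [CommRing R]

lemma fwdDiff_pow_succ_eq (j : ℕ) (x : R) :
    Δ_[1] (· ^ (j + 1)) x = ∑ i ∈ range j, x ^ (i + 1) * ((j + 1).choose (i + 1) : R) + 1 := by
  simp only [fwdDiff, add_pow, one_pow, mul_one]
  rw [sum_range_succ, sum_range_succ']
  simp

lemma sum_Icc_fwdDiff_pow (k : ℕ) (x : R) {c : ℕ} (hc : 1 ≤ c) :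
    ∑ i ∈ Icc 2 c, Δ_[1] (· ^ k) (x + i - 1) = (x + c) ^ k - (x + 1) ^ k := by
  induction c, hc using Nat.le_induction with
  | base => simp
  | succ c hc ih =>
    rw [sum_Icc_succ_top (by omega), ih]
    simp only [fwdDiff]
    push_cast
    ring

end CommRing

section LinearOrderedCommRing

variable {R : Type*} [CommRing R] [LinearOrder R] [IsStrictOrderedRing R]

lemma fwdDiff_pow_add_le (k : ℕ) {x y : R} (hx : 0 ≤ x) (hy : 0 ≤ y) :
    Δ_[1] (· ^ k) x + Δ_[1] (· ^ k) y ≤ Δ_[1] (· ^ k) (x + y) + 1 := by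
  rcases k with _ | j
  · simp [fwdDiff]
  rw [fwdDiff_pow_succ_eq, fwdDiff_pow_succ_eq, fwdDiff_pow_succ_eq]
  have : ∑ i ∈ range j, (x ^ (i + 1) + y ^ (i + 1)) * ((j + 1).choose (i + 1) : R)
      ≤ ∑ i ∈ range j, (x + y) ^ (i + 1) * ((j + 1).choose (i + 1) : R) :=
    sum_le_sum fun i _ =>
      mul_le_mul_of_nonneg_right (pow_add_pow_le hx hy i.succ_ne_zero) (Nat.cast_nonneg _)
  simp only [add_mul, sum_add_distrib] at this
  linarith

lemma pow_add_pow_add_mul_fwdDiff_le {k : ℕ} (hk : k ≠ 0) {x : R} (hx : 0 ≤ x) (m : ℕ) :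
    x ^ k + (m : R) ^ k + m * (Δ_[1] (· ^ k) x - 1) ≤ (x + m) ^ k := by
  induction m with
  | zero => simp [hk]
  | succ m ih =>
    have hsup := fwdDiff_pow_add_le k hx (Nat.cast_nonneg (α := R) m)
    simp only [fwdDiff] at hsup ih ⊢
    push_cast
    rw [← add_assoc]
    linarith

lemma fwdDiff_pow_add_fwdDiff_pow_le (k : ℕ) {x y : R} (hx : 0 ≤ x) (hy : 0 ≤ y) :
    Δ_[1] (· ^ k) x + Δ_[1] (· ^ k) y ≤ Δ_[1] (· ^ k) (x + y + 1) + 3 - 2 ^ k := by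
  have hxy := fwdDiff_pow_add_le k hx hy
  have hone := fwdDiff_pow_add_le k (add_nonneg hx hy) zero_le_one
  have h1 : Δ_[1] (· ^ k) (1 : R) = 2 ^ k - 1 := by norm_num [fwdDiff, one_add_one_eq_two]
  linarith

end LinearOrderedCommRing

lemma sum_Icc_one_eq_add_sum_Icc_two {M : Type*} [AddCommMonoid M] {c : ℕ} (hc : 1 ≤ c)
    (f : ℕ → M) :
    ∑ i ∈ Icc 1 c, f i = f 1 + ∑ i ∈ Icc 2 c, f i :=
  (add_sum_Ioc_eq_sum_Icc hc).symm

def transpose (Y : Finset (ℕ × ℕ)) : Finset (ℕ × ℕ) := Y.map (Equiv.prodComm ℕ ℕ).toEmbedding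

section Transpose

variable {Y : Finset (ℕ × ℕ)}

lemma mem_transpose {u : ℕ × ℕ} : u ∈ transpose Y ↔ u.swap ∈ Y := by
  simp [transpose]

lemma sum_transpose {M : Type*} [AddCommMonoid M] (F : ℕ × ℕ → M) :
    ∑ u ∈ transpose Y, F u = ∑ u ∈ Y, F u.swap :=
  sum_map _ _ _

lemma row_transpose (i : ℕ) : row (transpose Y) i = col Y i := by
  rw [row, col, transpose, filter_map, card_map]
  rfl

lemma col_transpose (j : ℕ) : col (transpose Y) j = row Y j := by
  rw [row, col, transpose, filter_map, card_map]
  rfl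

lemma hk_transpose (i j : ℕ) : hk (transpose Y) (i, j) = hk Y (j, i) := by
  simp only [hk, row_transpose, col_transpose]
  ring

lemma IsYoung.isYoung_transpose (hY : IsYoung Y) : IsYoung (transpose Y) := by
  refine ⟨fun p hp => (hY.1 _ (mem_transpose.1 hp)).symm, fun p hp q h1 h2 h1p h2p => ?_⟩
  exact mem_transpose.2 (hY.2 _ (mem_transpose.1 hp) q.swap h2 h1 h2p h1p)

end Transpose

def innerCells (Y : Finset (ℕ × ℕ)) : Finset (ℕ × ℕ) := Y.filter fun u => 2 ≤ u.1 ∧ 2 ≤ u.2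

def innerDiagram (Y : Finset (ℕ × ℕ)) : Finset (ℕ × ℕ) :=
  (innerCells Y).image fun u => (u.1 - 1, u.2 - 1)

section Inner

variable {Y : Finset (ℕ × ℕ)}

lemma innerCells_transpose : innerCells (transpose Y) = transpose (innerCells Y) := by
  ext u
  simp only [innerCells, mem_filter, mem_transpose, Prod.fst_swap, Prod.snd_swap, and_comm]

lemma mem_innerDiagram {i j : ℕ} :
    (i, j) ∈ innerDiagram Y ↔ 1 ≤ i ∧ 1 ≤ j ∧ (i + 1, j + 1) ∈ Y := by
  simp only [innerDiagram, innerCells, mem_image, mem_filter, Prod.ext_iff]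
  constructor
  · rintro ⟨⟨a, b⟩, ⟨hab, ha, hb⟩, rfl, rfl⟩
    refine ⟨by omega, by omega, ?_⟩
    rwa [Nat.sub_add_cancel (by omega), Nat.sub_add_cancel (by omega)]
  · rintro ⟨hi, hj, h⟩
    exact ⟨(i + 1, j + 1), ⟨h, by omega, by omega⟩, by simp, by simp⟩

lemma injOn_innerCells : Set.InjOn (fun u : ℕ × ℕ => (u.1 - 1, u.2 - 1)) (innerCells Y) := by
  intro u hu v hv h
  simp only [innerCells, coe_filter, Set.mem_ofPred_eq, Prod.ext_iff] at hu hv h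
  ext <;> omega

lemma sum_innerDiagram {M : Type*} [AddCommMonoid M] (F : ℕ × ℕ → M) :
    ∑ u ∈ innerDiagram Y, F u = ∑ u ∈ innerCells Y, F (u.1 - 1, u.2 - 1) :=
  sum_image injOn_innerCells

lemma card_innerDiagram : #(innerDiagram Y) = #(innerCells Y) :=
  card_image_of_injOn injOn_innerCells

end Inner

def hookExcess (k : ℕ) (Y : Finset (ℕ × ℕ)) : ℤ :=
  ∑ u ∈ Y, hk Y u ^ k - (#Y : ℤ) ^ k - ∑ u ∈ Y, |ct u| ^ k

namespace IsYoung

variable {Y : Finset (ℕ × ℕ)}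

lemma mem_iff_le_col (hY : IsYoung Y) {i j : ℕ} : (i, j) ∈ Y ↔ 1 ≤ i ∧ 1 ≤ j ∧ i ≤ col Y j := by
  have hinj : Function.Injective fun x : ℕ => (x, j) := fun _ _ h => (Prod.mk.inj h).1
  constructor
  · intro h
    obtain ⟨hi, hj⟩ := hY.1 _ h
    refine ⟨hi, hj, ?_⟩
    have hsub : (Icc 1 i).image (·, j) ⊆ Y.filter (·.2 = j) := by
      simp only [subset_iff, mem_image, mem_Icc, mem_filter]
      rintro _ ⟨x, ⟨hx1, hxi⟩, rfl⟩
      exact ⟨hY.2 _ h _ hx1 hj hxi le_rfl, rfl⟩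
    simpa [col, card_image_of_injective _ hinj] using card_le_card hsub
  · rintro ⟨hi, hj, hle⟩
    by_contra hnot
    have hsub : Y.filter (·.2 = j) ⊆ (Ico 1 i).image (·, j) := by
      intro p hp
      rw [mem_filter] at hp
      have hpi : p.1 < i := by
        by_contra! hge
        exact hnot (hY.2 p hp.1 (i, j) hi hj hge hp.2.ge)
      exact mem_image.2 ⟨p.1, mem_Ico.2 ⟨(hY.1 _ hp.1).1, hpi⟩, by rw [← hp.2]⟩
    have := card_le_card hsub
    rw [card_image_of_injective _ hinj, Nat.card_Ico] at this
    unfold col at hle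
    omega

lemma mem_iff_le_row (hY : IsYoung Y) {i j : ℕ} : (i, j) ∈ Y ↔ 1 ≤ i ∧ 1 ≤ j ∧ j ≤ row Y i := by
  have h := hY.isYoung_transpose.mem_iff_le_col (i := j) (j := i)
  rwa [mem_transpose, col_transpose, Prod.swap_prod_mk, and_left_comm] at h

lemma le_row_one (hY : IsYoung Y) {i j : ℕ} (h : (i, j) ∈ Y) : j ≤ row Y 1 :=
  (hY.mem_iff_le_row.1 (hY.2 _ h (1, j) le_rfl (hY.1 _ h).2 (hY.1 _ h).1 le_rfl)).2.2

lemma le_col_one (hY : IsYoung Y) {i j : ℕ} (h : (i, j) ∈ Y) : i ≤ col Y 1 :=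
  (hY.mem_iff_le_col.1 (hY.2 _ h (i, 1) (hY.1 _ h).1 le_rfl le_rfl (hY.1 _ h).2)).2.2

lemma mem_iff_mem_Icc (hY : IsYoung Y) {i j : ℕ} :
    (i, j) ∈ Y ↔ 1 ≤ i ∧ 1 ≤ j ∧ j ≤ row Y 1 ∧ i ≤ col Y j := by
  refine ⟨fun h => ?_, fun h => hY.mem_iff_le_col.2 (by omega)⟩
  have := hY.le_row_one h
  rw [hY.mem_iff_le_col] at h
  omega

lemma one_one_mem (hY : IsYoung Y) (hne : Y.Nonempty) : (1, 1) ∈ Y := by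
  obtain ⟨u, hu⟩ := hne
  exact hY.2 u hu (1, 1) le_rfl le_rfl (hY.1 u hu).1 (hY.1 u hu).2

lemma isYoung_innerDiagram (hY : IsYoung Y) : IsYoung (innerDiagram Y) := by
  refine ⟨fun p hp => ?_, fun p hp q hq1 hq2 hqp1 hqp2 => ?_⟩
  · obtain ⟨h1, h2, -⟩ := mem_innerDiagram.1 hp
    exact ⟨h1, h2⟩
  · obtain ⟨-, -, hpY⟩ := mem_innerDiagram.1 hp
    exact mem_innerDiagram.2 ⟨hq1, hq2, hY.2 _ hpY _ (by omega) (by omega) (by simpa) (by simpa)⟩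

lemma row_innerDiagram (hY : IsYoung Y) {i : ℕ} (hi : 1 ≤ i) :
    row (innerDiagram Y) i = row Y (i + 1) - 1 := by
  have key : ∀ j, 1 ≤ j → (j ≤ row (innerDiagram Y) i ↔ j + 1 ≤ row Y (i + 1)) := by
    intro j hj
    have h := (hY.isYoung_innerDiagram.mem_iff_le_row (i := i) (j := j)).symm.trans
      mem_innerDiagram
    rw [hY.mem_iff_le_row] at h
    omega
  have h1 := key (row (innerDiagram Y) i)
  have h2 := key (row Y (i + 1) - 1)
  omega

lemma col_innerDiagram (hY : IsYoung Y) {j : ℕ} (hj : 1 ≤ j) :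
    col (innerDiagram Y) j = col Y (j + 1) - 1 := by
  have key : ∀ i, 1 ≤ i → (i ≤ col (innerDiagram Y) j ↔ i + 1 ≤ col Y (j + 1)) := by
    intro i hi
    have h := (hY.isYoung_innerDiagram.mem_iff_le_col (i := i) (j := j)).symm.trans
      mem_innerDiagram
    rw [hY.mem_iff_le_col] at h
    omega
  have h1 := key (col (innerDiagram Y) j)
  have h2 := key (col Y (j + 1) - 1)
  omega

lemma hk_innerDiagram (hY : IsYoung Y) {u : ℕ × ℕ} (hu : u ∈ innerCells Y) :
    hk (innerDiagram Y) (u.1 - 1, u.2 - 1) = hk Y u := by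
  obtain ⟨huY, hi, hj⟩ := mem_filter.1 hu
  have hr := hY.row_innerDiagram (i := u.1 - 1) (by omega)
  have hc := hY.col_innerDiagram (j := u.2 - 1) (by omega)
  have hrow := (hY.mem_iff_le_row (i := u.1) (j := u.2)).1 huY
  have hcol := (hY.mem_iff_le_col (i := u.1) (j := u.2)).1 huY
  rw [Nat.sub_add_cancel (by omega)] at hr hc
  simp only [hk, hr, hc]
  omega

lemma sum_eq_sum_Icc (hY : IsYoung Y) {M : Type*} [AddCommMonoid M] (F : ℕ × ℕ → M) :
    ∑ u ∈ Y, F u = ∑ j ∈ Icc 1 (row Y 1), ∑ i ∈ Icc 1 (col Y j), F (i, j) :=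
  sum_finset_product_right _ _ _ fun ⟨i, j⟩ => by
    simp only [mem_Icc, hY.mem_iff_mem_Icc]
    omega

lemma sum_innerCells_eq_sum_Icc (hY : IsYoung Y) {M : Type*} [AddCommMonoid M]
    (F : ℕ × ℕ → M) :
    ∑ u ∈ innerCells Y, F u = ∑ j ∈ Icc 2 (row Y 1), ∑ i ∈ Icc 2 (col Y j), F (i, j) :=
  sum_finset_product_right _ _ _ fun ⟨i, j⟩ => by
    simp only [innerCells, mem_filter, mem_Icc, hY.mem_iff_mem_Icc]
    omega

lemma sum_eq_add_sum_innerCells (hY : IsYoung Y) (h11 : (1, 1) ∈ Y) {M : Type*}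
    [AddCommMonoid M] (F : ℕ × ℕ → M) :
    ∑ u ∈ Y, F u = F (1, 1) + ∑ j ∈ Icc 2 (row Y 1), F (1, j)
      + ∑ i ∈ Icc 2 (col Y 1), F (i, 1) + ∑ u ∈ innerCells Y, F u := by
  have ha : 1 ≤ row Y 1 := hY.le_row_one h11
  have hcol : ∀ j ∈ Icc 1 (row Y 1), ∑ i ∈ Icc 1 (col Y j), F (i, j)
      = F (1, j) + ∑ i ∈ Icc 2 (col Y j), F (i, j) := by
    intro j hj
    rw [mem_Icc] at hj
    have h1j : (1, j) ∈ Y := hY.mem_iff_le_row.2 ⟨le_rfl, hj⟩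
    exact sum_Icc_one_eq_add_sum_Icc_two (hY.mem_iff_le_col.1 h1j).2.2 _
  rw [hY.sum_eq_sum_Icc, sum_congr rfl hcol, sum_add_distrib, sum_Icc_one_eq_add_sum_Icc_two ha,
    sum_Icc_one_eq_add_sum_Icc_two ha (fun j => ∑ i ∈ Icc 2 (col Y j), F (i, j)),
    hY.sum_innerCells_eq_sum_Icc]
  abel

lemma sum_hk_pow_row_one (hY : IsYoung Y) (k : ℕ) :
    ∑ j ∈ Icc 2 (row Y 1), hk Y (1, j) ^ k = ∑ j ∈ Icc 2 (row Y 1), ((j : ℤ) - 1) ^ k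
      + ∑ u ∈ innerCells Y, Δ_[1] (· ^ k) ((row Y 1 : ℤ) - u.2 + u.1 - 1) := by
  have hcol : ∀ j ∈ Icc 2 (row Y 1),
      ∑ i ∈ Icc 2 (col Y j), Δ_[1] (· ^ k) ((row Y 1 : ℤ) - j + i - 1)
        = hk Y (1, j) ^ k - ((row Y 1 : ℤ) - j + 1) ^ k := by
    intro j hj
    rw [mem_Icc] at hj
    have h1j : (1, j) ∈ Y := hY.mem_iff_le_row.2 ⟨le_rfl, by omega, hj.2⟩
    rw [sum_Icc_fwdDiff_pow k _ (hY.mem_iff_le_col.1 h1j).2.2, hk]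
    ring
  have hreflect : ∑ j ∈ Icc 2 (row Y 1), ((row Y 1 : ℤ) - j + 1) ^ k
      = ∑ j ∈ Icc 2 (row Y 1), ((j : ℤ) - 1) ^ k := by
    refine sum_nbij' (fun j => row Y 1 + 2 - j) (fun j => row Y 1 + 2 - j) ?_ ?_ ?_ ?_ ?_ <;>
      simp only [mem_Icc] <;> intro j hj
    all_goals first | omega | (congr 1; omega)
  rw [hY.sum_innerCells_eq_sum_Icc, sum_congr rfl hcol, sum_sub_distrib, hreflect]
  ring

lemma sum_hk_pow_col_one (hY : IsYoung Y) (k : ℕ) :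
    ∑ i ∈ Icc 2 (col Y 1), hk Y (i, 1) ^ k = ∑ i ∈ Icc 2 (col Y 1), ((i : ℤ) - 1) ^ k
      + ∑ u ∈ innerCells Y, Δ_[1] (· ^ k) ((col Y 1 : ℤ) - u.1 + u.2 - 1) := by
  have h := hY.isYoung_transpose.sum_hk_pow_row_one k
  simpa only [row_transpose, hk_transpose, innerCells_transpose, sum_transpose, Prod.fst_swap,
    Prod.snd_swap] using h

lemma card_eq_add_card_innerDiagram (hY : IsYoung Y) (h11 : (1, 1) ∈ Y) :
    #Y = row Y 1 + col Y 1 - 1 + #(innerDiagram Y) := by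
  have h := hY.sum_eq_add_sum_innerCells h11 fun _ => 1
  have ha := hY.le_row_one h11
  have hl := hY.le_col_one h11
  simp only [sum_const, smul_eq_mul, mul_one, Nat.card_Icc] at h
  rw [card_innerDiagram]
  omega

lemma sum_abs_ct_pow (hY : IsYoung Y) (h11 : (1, 1) ∈ Y) {k : ℕ} (hk : k ≠ 0) :
    ∑ u ∈ Y, |ct u| ^ k = ∑ j ∈ Icc 2 (row Y 1), ((j : ℤ) - 1) ^ k
      + ∑ i ∈ Icc 2 (col Y 1), ((i : ℤ) - 1) ^ k + ∑ u ∈ innerDiagram Y, |ct u| ^ k := by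
  have hrow : ∀ j ∈ Icc 2 (row Y 1), |ct (1, j)| ^ k = ((j : ℤ) - 1) ^ k := fun j hj => by
    rw [mem_Icc] at hj
    rw [ct, abs_of_nonneg (by push_cast; omega)]
    push_cast
    ring
  have hcol : ∀ i ∈ Icc 2 (col Y 1), |ct (i, 1)| ^ k = ((i : ℤ) - 1) ^ k := fun i hi => by
    rw [mem_Icc] at hi
    rw [ct, abs_of_nonpos (by push_cast; omega)]
    push_cast
    ring
  have hinner : ∀ u ∈ innerCells Y, |ct (u.1 - 1, u.2 - 1)| ^ k = |ct u| ^ k := fun u hu => by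
    obtain ⟨-, h1, h2⟩ := mem_filter.1 hu
    congr 2
    simp only [ct]
    omega
  rw [hY.sum_eq_add_sum_innerCells h11, sum_congr rfl hrow, sum_congr rfl hcol, sum_innerDiagram,
    sum_congr rfl hinner]
  simp [ct, hk]

lemma sum_hk_pow (hY : IsYoung Y) (h11 : (1, 1) ∈ Y) (k : ℕ) :
    ∑ u ∈ Y, hk Y u ^ k = ((row Y 1 : ℤ) + col Y 1 - 1) ^ k
      + ∑ j ∈ Icc 2 (row Y 1), ((j : ℤ) - 1) ^ k + ∑ i ∈ Icc 2 (col Y 1), ((i : ℤ) - 1) ^ k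
      + ∑ u ∈ innerDiagram Y, hk (innerDiagram Y) u ^ k
      + ∑ u ∈ innerCells Y, (Δ_[1] (· ^ k) ((row Y 1 : ℤ) - u.2 + u.1 - 1)
          + Δ_[1] (· ^ k) ((col Y 1 : ℤ) - u.1 + u.2 - 1)) := by
  have hcorner : hk Y (1, 1) = (row Y 1 : ℤ) + col Y 1 - 1 := by
    simp only [hk]
    push_cast
    ring
  have hinner : ∀ u ∈ innerCells Y, hk (innerDiagram Y) (u.1 - 1, u.2 - 1) ^ k = hk Y u ^ k :=
    fun u hu => by rw [hY.hk_innerDiagram hu]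
  rw [hY.sum_eq_add_sum_innerCells h11, hY.sum_hk_pow_row_one, hY.sum_hk_pow_col_one,
    sum_innerDiagram, sum_congr rfl hinner, sum_add_distrib, hcorner]
  ring

lemma hookExcess_eq (hY : IsYoung Y) (h11 : (1, 1) ∈ Y) {k : ℕ} (hk : k ≠ 0) :
    hookExcess k Y = hookExcess k (innerDiagram Y) + ((row Y 1 : ℤ) + col Y 1 - 1) ^ k
      + (#(innerDiagram Y) : ℤ) ^ k - ((row Y 1 : ℤ) + col Y 1 - 1 + #(innerDiagram Y)) ^ k
      + ∑ u ∈ innerCells Y, (Δ_[1] (· ^ k) ((row Y 1 : ℤ) - u.2 + u.1 - 1)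
          + Δ_[1] (· ^ k) ((col Y 1 : ℤ) - u.1 + u.2 - 1)) := by
  have ha := hY.le_row_one h11
  have hcard : (#Y : ℤ) = (row Y 1 : ℤ) + col Y 1 - 1 + #(innerDiagram Y) := by
    rw [hY.card_eq_add_card_innerDiagram h11]
    omega
  rw [hookExcess, hookExcess, hY.sum_hk_pow h11, hY.sum_abs_ct_pow h11 hk, hcard]
  ring

lemma hookExcess_add_le (hY : IsYoung Y) (h11 : (1, 1) ∈ Y) {k : ℕ} (hk : k ≠ 0) :
    hookExcess k Y + #(innerDiagram Y) * (2 ^ k - 4) ≤ hookExcess k (innerDiagram Y) := by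
  set N : ℤ := (row Y 1 : ℤ) + col Y 1 - 1
  have hN : 0 ≤ N := by
    have := hY.le_row_one h11
    omega
  have hcell : ∀ u ∈ innerCells Y, Δ_[1] (· ^ k) ((row Y 1 : ℤ) - u.2 + u.1 - 1)
      + Δ_[1] (· ^ k) ((col Y 1 : ℤ) - u.1 + u.2 - 1) ≤ Δ_[1] (· ^ k) N + 3 - 2 ^ k := by
    intro u hu
    obtain ⟨huY, hi, hj⟩ := mem_filter.1 hu
    have hjr := hY.le_row_one huY
    have hic := hY.le_col_one huY
    have h := fwdDiff_pow_add_fwdDiff_pow_le k (x := (row Y 1 : ℤ) - u.2 + u.1 - 1)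
      (y := (col Y 1 : ℤ) - u.1 + u.2 - 1) (by omega) (by omega)
    rwa [show (row Y 1 : ℤ) - u.2 + u.1 - 1 + ((col Y 1 : ℤ) - u.1 + u.2 - 1) + 1 = N by ring] at h
  have hD := sum_le_card_nsmul _ _ _ hcell
  rw [← card_innerDiagram, nsmul_eq_mul] at hD
  have hpow := pow_add_pow_add_mul_fwdDiff_le hk hN #(innerDiagram Y)
  rw [hY.hookExcess_eq h11 hk]
  linarith

lemma hookExcess_nonpos (hY : IsYoung Y) {k : ℕ} (hk : 2 ≤ k) : hookExcess k Y ≤ 0 := by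
  induction hn : #Y using Nat.strong_induction_on generalizing Y with
  | _ n ih =>
    rcases Y.eq_empty_or_nonempty with rfl | hne
    · simp [hookExcess, show k ≠ 0 by omega]
    have h11 := hY.one_one_mem hne
    have hlt : #(innerDiagram Y) < n := by
      rw [← hn, hY.card_eq_add_card_innerDiagram h11]
      have h1 : 1 ≤ row Y 1 := hY.le_row_one h11
      have h2 : 1 ≤ col Y 1 := hY.le_col_one h11
      omega
    have hstep := hY.hookExcess_add_le h11 (k := k) (by omega)
    have hinner := ih _ hlt hY.isYoung_innerDiagram rfl
    have h4 : (4 : ℤ) ≤ 2 ^ k := by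
      calc (4 : ℤ) = 2 ^ 2 := by norm_num
        _ ≤ 2 ^ k := pow_le_pow_right₀ (by norm_num) hk
    have := mul_nonneg (Nat.cast_nonneg (α := ℤ) #(innerDiagram Y)) (sub_nonneg.2 h4)
    linarith

lemma isHook_iff_innerCells_eq_empty (hY : IsYoung Y) : IsHook Y ↔ innerCells Y = ∅ := by
  rw [eq_empty_iff_forall_notMem]
  constructor
  · intro h u hu
    obtain ⟨huY, hi, hj⟩ := mem_filter.1 hu
    have hrow := (hY.mem_iff_le_row (i := u.1) (j := u.2)).1 huY
    have := h u.1 hi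
    omega
  · intro h i hi
    by_contra! hrow
    exact h (i, 2) (mem_filter.2 ⟨hY.mem_iff_le_row.2 ⟨by omega, by omega, hrow⟩, hi, le_rfl⟩)

lemma hookExcess_neg (hY : IsYoung Y) {k : ℕ} (hk : 3 ≤ k) (hnot : ¬IsHook Y) :
    hookExcess k Y < 0 := by
  rw [hY.isHook_iff_innerCells_eq_empty, ← ne_eq, ← nonempty_iff_ne_empty] at hnot
  have h11 := hY.one_one_mem (hnot.mono (filter_subset _ _))
  have hm : (0 : ℤ) < #(innerDiagram Y) := by exact_mod_cast card_innerDiagram ▸ hnot.card_pos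
  have hstep := hY.hookExcess_add_le h11 (k := k) (by omega)
  have hinner := hY.isYoung_innerDiagram.hookExcess_nonpos (k := k) (by omega)
  have h8 : (8 : ℤ) ≤ 2 ^ k := by
    calc (8 : ℤ) = 2 ^ 3 := by norm_num
      _ ≤ 2 ^ k := pow_le_pow_right₀ (by norm_num) hk
  have := mul_pos hm (show (0 : ℤ) < 2 ^ k - 4 by linarith)
  linarith

lemma hookExcess_eq_zero_of_isHook (hY : IsYoung Y) {k : ℕ} (hk : k ≠ 0) (hhook : IsHook Y) :
    hookExcess k Y = 0 := by
  rcases Y.eq_empty_or_nonempty with rfl | hne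
  · simp [hookExcess, hk]
  have hI := hY.isHook_iff_innerCells_eq_empty.1 hhook
  have hD : innerDiagram Y = ∅ := by simp [innerDiagram, hI]
  rw [hY.hookExcess_eq (hY.one_one_mem hne) hk, hD, hI]
  simp [hookExcess, hk]

end IsYoung

theorem sum_hook_pow_le_general (n : ℕ) (Y : Finset (ℕ × ℕ))
    (hY : IsYoung Y) (hcard : Y.card = n) (k : ℕ) (hk3 : 3 ≤ k) :
    (∑ u ∈ Y, (hk Y u) ^ k ≤ (n : ℤ) ^ k + ∑ u ∈ Y, |ct u| ^ k) ∧
      ((∑ u ∈ Y, (hk Y u) ^ k = (n : ℤ) ^ k + ∑ u ∈ Y, |ct u| ^ k) ↔ IsHook Y) := by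
  subst hcard
  have hle := hY.hookExcess_nonpos (k := k) (by omega)
  have hiff : hookExcess k Y = 0 ↔ IsHook Y :=
    ⟨fun h => by_contra fun hhook => (hY.hookExcess_neg hk3 hhook).ne h,
      hY.hookExcess_eq_zero_of_isHook (by omega)⟩
  rw [hookExcess] at hle hiff
  exact ⟨by linarith, by rw [← hiff]; constructor <;> intro h <;> linarith⟩

theorem sum_hook_pow_le (n : ℕ) (hn : 0 < n) (Y : Finset (ℕ × ℕ))
    (hY : IsYoung Y) (hcard : Y.card = n) (k : ℕ) (hk3 : 3 ≤ k) :
    (∑ u ∈ Y, (hk Y u) ^ k ≤ (n : ℤ) ^ k + ∑ u ∈ Y, |ct u| ^ k) ∧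
      ((∑ u ∈ Y, (hk Y u) ^ k = (n : ℤ) ^ k + ∑ u ∈ Y, |ct u| ^ k) ↔ IsHook Y) :=
  sum_hook_pow_le_general n Y hY hcard k hk3
end

section
/- For any partition λ of a positive integer n, Σ_{u∈λ} h(u) ≥ n + Σ_{u∈λ} |c(u)|, with equality if and only if λ is a hook. -/
open Finset

/-!
Write `h(u) = 1 + arm(u) + leg(u)`. For a cell `u = (i, j)` on or above the diagonal, `|c(u)|`
counts the cells `(i, k)` of its row with `i ≤ k < j`; below the diagonal it counts the cells
`(k, j)` of its column with `j ≤ k < i`. Double counting turns `∑ |c(u)|` into the sum of the arms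
of the cells on or above the diagonal plus the legs of the cells on or below it. Hence
`∑ h(u) - n - ∑ |c(u)|` is the sum of the arms of the cells strictly below the diagonal plus the
legs of the cells strictly above it, and both vanish exactly when no row below the first has
two cells.
-/
def arm (Y : Finset (ℕ × ℕ)) (u : ℕ × ℕ) : ℕ := #{v ∈ Y | v.1 = u.1 ∧ u.2 < v.2}

def leg (Y : Finset (ℕ × ℕ)) (u : ℕ × ℕ) : ℕ := #{v ∈ Y | v.2 = u.2 ∧ u.1 < v.1}

namespace IsYoung

variable {Y : Finset (ℕ × ℕ)}

lemma card_filter_row (hY : IsYoung Y) {i j : ℕ} (hij : (i, j) ∈ Y) {S : Finset ℕ}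
    (hS : S ⊆ Icc 1 j) : #{v ∈ Y | v.1 = i ∧ v.2 ∈ S} = #S := by
  have : {v ∈ Y | v.1 = i ∧ v.2 ∈ S} = S.image (i, ·) := by
    ext ⟨a, b⟩
    simp only [mem_filter, mem_image, Prod.mk.injEq]
    constructor
    · rintro ⟨-, rfl, hb⟩
      exact ⟨b, hb, rfl, rfl⟩
    · rintro ⟨k, hk, rfl, rfl⟩
      obtain ⟨hk1, hkj⟩ := mem_Icc.1 (hS hk)
      exact ⟨hY.2 _ hij _ (hY.1 _ hij).1 hk1 le_rfl hkj, rfl, hk⟩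
  rw [this, card_image_of_injective _ (Prod.mk_right_injective i)]

lemma card_filter_col (hY : IsYoung Y) {i j : ℕ} (hij : (i, j) ∈ Y) {S : Finset ℕ}
    (hS : S ⊆ Icc 1 i) : #{v ∈ Y | v.2 = j ∧ v.1 ∈ S} = #S := by
  have : {v ∈ Y | v.2 = j ∧ v.1 ∈ S} = S.image (·, j) := by
    ext ⟨a, b⟩
    simp only [mem_filter, mem_image, Prod.mk.injEq]
    constructor
    · rintro ⟨-, rfl, ha⟩
      exact ⟨a, ha, rfl, rfl⟩
    · rintro ⟨k, hk, rfl, rfl⟩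
      obtain ⟨hk1, hki⟩ := mem_Icc.1 (hS hk)
      exact ⟨hY.2 _ hij _ hk1 (hY.1 _ hij).2 hki le_rfl, rfl, hk⟩
  rw [this, card_image_of_injective _ (Prod.mk_left_injective j)]

lemma row_eq_add_arm (hY : IsYoung Y) {u : ℕ × ℕ} (hu : u ∈ Y) :
    row Y u.1 = u.2 + arm Y u := by
  rw [row, ← card_filter_add_card_filter_not (fun v : ℕ × ℕ => v.2 ≤ u.2), filter_filter,
    filter_filter, arm]
  congr 1
  · have hcells := hY.card_filter_row hu (subset_refl (Icc 1 u.2))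
    rw [Nat.card_Icc, Nat.add_sub_cancel] at hcells
    refine (congrArg card (filter_congr fun v hv => ?_)).trans hcells
    simp [mem_Icc, (hY.1 v hv).2]
  · simp only [not_le]

lemma col_eq_add_leg (hY : IsYoung Y) {u : ℕ × ℕ} (hu : u ∈ Y) :
    col Y u.2 = u.1 + leg Y u := by
  rw [col, ← card_filter_add_card_filter_not (fun v : ℕ × ℕ => v.1 ≤ u.1), filter_filter,
    filter_filter, leg]
  congr 1
  · have hcells := hY.card_filter_col hu (subset_refl (Icc 1 u.1))
    rw [Nat.card_Icc, Nat.add_sub_cancel] at hcells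
    refine (congrArg card (filter_congr fun v hv => ?_)).trans hcells
    simp [mem_Icc, (hY.1 v hv).1]
  · simp only [not_le]

lemma hk_eq (hY : IsYoung Y) {u : ℕ × ℕ} (hu : u ∈ Y) :
    hk Y u = arm Y u + leg Y u + 1 := by
  rw [hk, hY.row_eq_add_arm hu, hY.col_eq_add_leg hu]
  push_cast
  ring

lemma natAbs_ct_eq (hY : IsYoung Y) {u : ℕ × ℕ} (hu : u ∈ Y) :
    (ct u).natAbs =
      #{v ∈ Y | v.1 = u.1 ∧ v.2 ∈ Ico u.1 u.2} + #{v ∈ Y | v.2 = u.2 ∧ v.1 ∈ Ico u.2 u.1} := by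
  obtain ⟨hu1, hu2⟩ := hY.1 u hu
  rw [hY.card_filter_row hu fun k hk => by simp only [mem_Ico, mem_Icc] at hk ⊢; omega,
    hY.card_filter_col hu fun k hk => by simp only [mem_Ico, mem_Icc] at hk ⊢; omega,
    Nat.card_Ico, Nat.card_Ico, ct]
  omega

lemma sum_natAbs_ct (hY : IsYoung Y) :
    ∑ u ∈ Y, (ct u).natAbs =
      ∑ v ∈ Y with v.1 ≤ v.2, arm Y v + ∑ v ∈ Y with v.2 ≤ v.1, leg Y v := by
  rw [sum_congr rfl fun u hu => hY.natAbs_ct_eq hu, sum_add_distrib, sum_filter, sum_filter]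
  congr 1 <;>
  · refine (sum_card_bipartiteAbove_eq_sum_card_bipartiteBelow _).trans
      (sum_congr rfl fun v _ => ?_)
    split_ifs
    · refine congrArg card (filter_congr fun u _ => ?_)
      simp only [mem_Ico]
      omega
    · refine card_eq_zero.2 (filter_false_of_mem fun u _ => ?_)
      simp only [mem_Ico]
      omega

lemma sum_hk_eq (hY : IsYoung Y) :
    ∑ u ∈ Y, hk Y u = #Y + ∑ u ∈ Y, |ct u| +
      (∑ v ∈ Y with v.2 < v.1, arm Y v + ∑ v ∈ Y with v.1 < v.2, leg Y v : ℕ) := by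
  have harm := sum_filter_add_sum_filter_not Y (fun v => v.1 ≤ v.2) (arm Y)
  have hleg := sum_filter_add_sum_filter_not Y (fun v => v.2 ≤ v.1) (leg Y)
  simp only [not_le] at harm hleg
  have hnat : ∑ u ∈ Y, (arm Y u + leg Y u + 1) = #Y + ∑ u ∈ Y, (ct u).natAbs +
      (∑ v ∈ Y with v.2 < v.1, arm Y v + ∑ v ∈ Y with v.1 < v.2, leg Y v) := by
    rw [hY.sum_natAbs_ct, sum_add_distrib, sum_add_distrib, ← harm, ← hleg, card_eq_sum_ones]
    ring
  rw [sum_congr rfl fun u hu => hY.hk_eq hu]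
  simp only [← Int.natCast_natAbs]
  exact_mod_cast hnat

lemma sum_arm_add_sum_leg_eq_zero_iff (hY : IsYoung Y) :
    ∑ v ∈ Y with v.2 < v.1, arm Y v + ∑ v ∈ Y with v.1 < v.2, leg Y v = 0 ↔ IsHook Y := by
  simp only [Nat.add_eq_zero_iff, sum_eq_zero_iff, mem_filter]
  constructor
  · rintro ⟨harm, -⟩ i hi
    by_contra! hrow
    obtain ⟨w, hw⟩ : ({v ∈ Y | v.1 = i}).Nonempty := card_pos.1 (by rw [row] at hrow; omega)
    obtain ⟨hwY, rfl⟩ := mem_filter.1 hw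
    have hw1 : (w.1, 1) ∈ Y := hY.2 w hwY _ (by omega) le_rfl le_rfl (hY.1 w hwY).2
    have hsplit : row Y w.1 = 1 + arm Y (w.1, 1) := hY.row_eq_add_arm hw1
    have harm0 : arm Y (w.1, 1) = 0 := harm _ ⟨hw1, by simp only; omega⟩
    omega
  · intro hhook
    refine ⟨fun v ⟨hv, hlt⟩ => ?_, fun v ⟨hv, hlt⟩ => ?_⟩
    · have hv2 := (hY.1 v hv).2
      have hsplit := hY.row_eq_add_arm hv
      have hshort := hhook v.1 (by omega)
      omega
    · refine card_eq_zero.2 (filter_false_of_mem fun w hw hwv => ?_)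
      obtain ⟨hcol, hlt'⟩ : w.2 = v.2 ∧ v.1 < w.1 := hwv
      have hv1 := (hY.1 v hv).1
      have hsplit := hY.row_eq_add_arm hw
      have hshort := hhook w.1 (by omega)
      omega

end IsYoung

theorem sum_hook_ge_general (n : ℕ) (Y : Finset (ℕ × ℕ))
    (hY : IsYoung Y) (hcard : Y.card = n) :
    ((n : ℤ) + ∑ u ∈ Y, |ct u| ≤ ∑ u ∈ Y, hk Y u) ∧
      ((∑ u ∈ Y, hk Y u = (n : ℤ) + ∑ u ∈ Y, |ct u|) ↔ IsHook Y) := by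
  rw [hY.sum_hk_eq, hcard, add_eq_left, Nat.cast_eq_zero, hY.sum_arm_add_sum_leg_eq_zero_iff]
  exact ⟨le_add_of_nonneg_right (Nat.cast_nonneg _), Iff.rfl⟩

theorem sum_hook_ge (n : ℕ) (hn : 0 < n) (Y : Finset (ℕ × ℕ))
    (hY : IsYoung Y) (hcard : Y.card = n) :
    ((n : ℤ) + ∑ u ∈ Y, |ct u| ≤ ∑ u ∈ Y, hk Y u) ∧
      ((∑ u ∈ Y, hk Y u = (n : ℤ) + ∑ u ∈ Y, |ct u|) ↔ IsHook Y) :=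
  sum_hook_ge_general n Y hY hcard
end
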